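/- Let T be a concise 111-abundant tensor in A⊗B⊗C that is 1_A-generic. Then an element α ∈ A* generates A* as a module over the 111-algebra of T if and only if T(α) : B* → C has maximal rank. In particular, A* is a cyclic module over the 111-algebra if and only if T is 1_A-generic. -/

import Mathlib

open TensorProduct

noncomputable section

namespace Paper

variable {A B C : Type*} [AddCommGroup A] [Module ℂ A]
  [AddCommGroup B] [Module ℂ B] [AddCommGroup C] [Module ℂ C]

/-- Action of `X ∈ End(A)` on the `A`-factor: `X ∘_A T = (X ⊗ Id_B ⊗ Id_C)(T)`. -/
def actA (X : Module.End ℂ A) : A ⊗[ℂ] (B ⊗[ℂ] C) →ₗ[ℂ] A ⊗[ℂ] (B ⊗[ℂ] C) :=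
  TensorProduct.map X LinearMap.id

/-- Action of `Y ∈ End(B)` on the `B`-factor. -/
def actB (Y : Module.End ℂ B) : A ⊗[ℂ] (B ⊗[ℂ] C) →ₗ[ℂ] A ⊗[ℂ] (B ⊗[ℂ] C) :=
  TensorProduct.map LinearMap.id (TensorProduct.map Y LinearMap.id)

/-- Action of `Z ∈ End(C)` on the `C`-factor. -/
def actC (Z : Module.End ℂ C) : A ⊗[ℂ] (B ⊗[ℂ] C) →ₗ[ℂ] A ⊗[ℂ] (B ⊗[ℂ] C) :=
  TensorProduct.map LinearMap.id (TensorProduct.map LinearMap.id Z)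

/-- Contraction of the `A`-factor against `α ∈ A*`: `T ↦ T(α) ∈ B ⊗ C`. -/
def contrA (α : Module.Dual ℂ A) : A ⊗[ℂ] (B ⊗[ℂ] C) →ₗ[ℂ] B ⊗[ℂ] C :=
  (TensorProduct.lid ℂ (B ⊗[ℂ] C)).toLinearMap ∘ₗ TensorProduct.map α LinearMap.id

/-- Contraction of the `B`-factor against `β ∈ B*`: `T ↦ T(β) ∈ A ⊗ C`. -/
def contrB (β : Module.Dual ℂ B) : A ⊗[ℂ] (B ⊗[ℂ] C) →ₗ[ℂ] A ⊗[ℂ] C :=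
  TensorProduct.map LinearMap.id
    ((TensorProduct.lid ℂ C).toLinearMap ∘ₗ TensorProduct.map β LinearMap.id)

/-- Contraction of the `C`-factor against `γ ∈ C*`: `T ↦ T(γ) ∈ A ⊗ B`. -/
def contrC (γ : Module.Dual ℂ C) : A ⊗[ℂ] (B ⊗[ℂ] C) →ₗ[ℂ] A ⊗[ℂ] B :=
  TensorProduct.map LinearMap.id
    ((TensorProduct.rid ℂ B).toLinearMap ∘ₗ TensorProduct.map LinearMap.id γ)

/-- A tensor is concise if all three flattening maps are injective. -/
def Concise (T : A ⊗[ℂ] (B ⊗[ℂ] C)) : Prop :=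
  Function.Injective (fun α : Module.Dual ℂ A => contrA α T) ∧
  Function.Injective (fun β : Module.Dual ℂ B => contrB β T) ∧
  Function.Injective (fun γ : Module.Dual ℂ C => contrC γ T)

/-- View an element of `M ⊗ N` as a linear map `M* → N`. -/
def toHom {M N : Type*} [AddCommGroup M] [Module ℂ M] [AddCommGroup N] [Module ℂ N] :
    M ⊗[ℂ] N →ₗ[ℂ] (Module.Dual ℂ M →ₗ[ℂ] N) :=
  (dualTensorHom ℂ (Module.Dual ℂ M) N).comp
    (TensorProduct.map (Module.Dual.eval ℂ M) LinearMap.id)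

/-- A triple `(X,Y,Z)` is compatible with `T` if `X∘_A T = Y∘_B T = Z∘_C T`. -/
def Compat (T : A ⊗[ℂ] (B ⊗[ℂ] C))
    (p : Module.End ℂ A × Module.End ℂ B × Module.End ℂ C) : Prop :=
  actA p.1 T = actB p.2.1 T ∧ actB p.2.1 T = actC p.2.2 T

/-- The subspace `T(A*) ⊗ A ⊆ A ⊗ B ⊗ C`. -/
def spanA (T : A ⊗[ℂ] (B ⊗[ℂ] C)) : Submodule ℂ (A ⊗[ℂ] (B ⊗[ℂ] C)) :=
  Submodule.span ℂ {x | ∃ (a : A) (α : Module.Dual ℂ A), x = a ⊗ₜ[ℂ] contrA α T}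

/-- The subspace `T(B*) ⊗ B ⊆ A ⊗ B ⊗ C` (factors in the correct positions). -/
def spanB (T : A ⊗[ℂ] (B ⊗[ℂ] C)) : Submodule ℂ (A ⊗[ℂ] (B ⊗[ℂ] C)) :=
  Submodule.span ℂ {x | ∃ (b : B) (β : Module.Dual ℂ B),
    x = (TensorProduct.leftComm ℂ B A C) (b ⊗ₜ[ℂ] contrB β T)}

/-- The subspace `T(C*) ⊗ C ⊆ A ⊗ B ⊗ C` (factors in the correct positions). -/
def spanC (T : A ⊗[ℂ] (B ⊗[ℂ] C)) : Submodule ℂ (A ⊗[ℂ] (B ⊗[ℂ] C)) :=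
  Submodule.span ℂ {x | ∃ (c : C) (γ : Module.Dual ℂ C),
    x = (TensorProduct.congr (LinearEquiv.refl ℂ A) (TensorProduct.comm ℂ C B))
      ((TensorProduct.leftComm ℂ C A B) (c ⊗ₜ[ℂ] contrC γ T))}

/-- The triple intersection `(T(A*)⊗A) ∩ (T(B*)⊗B) ∩ (T(C*)⊗C)`. -/
def tripleInt (T : A ⊗[ℂ] (B ⊗[ℂ] C)) : Submodule ℂ (A ⊗[ℂ] (B ⊗[ℂ] C)) :=
  spanA T ⊓ spanB T ⊓ spanC T

end Paper
namespace Paper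

variable {A B C : Type*} [AddCommGroup A] [Module ℂ A]
  [AddCommGroup B] [Module ℂ B] [AddCommGroup C] [Module ℂ C]

lemma contrA_actA (φ : Module.Dual ℂ A) (X : Module.End ℂ A) (t : A ⊗[ℂ] (B ⊗[ℂ] C)) :
    contrA φ (actA X t) = contrA (X.dualMap φ) t := by
  have h : (contrA φ ∘ₗ actA X : A ⊗[ℂ] (B ⊗[ℂ] C) →ₗ[ℂ] B ⊗[ℂ] C) = contrA (X.dualMap φ) := by
    apply TensorProduct.ext'
    intro a w
    simp [contrA, actA]
  exact LinearMap.congr_fun h t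

lemma contrA_actB (φ : Module.Dual ℂ A) (Y : Module.End ℂ B) (t : A ⊗[ℂ] (B ⊗[ℂ] C)) :
    contrA φ (actB Y t) = TensorProduct.map Y LinearMap.id (contrA φ t) := by
  have h : (contrA φ ∘ₗ actB Y : A ⊗[ℂ] (B ⊗[ℂ] C) →ₗ[ℂ] B ⊗[ℂ] C)
      = TensorProduct.map Y LinearMap.id ∘ₗ contrA φ := by
    apply TensorProduct.ext'
    intro a w
    simp [contrA, actB]
  exact LinearMap.congr_fun h t

lemma contrA_actC (φ : Module.Dual ℂ A) (Z : Module.End ℂ C) (t : A ⊗[ℂ] (B ⊗[ℂ] C)) :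
    contrA φ (actC Z t) = TensorProduct.map LinearMap.id Z (contrA φ t) := by
  have h : (contrA φ ∘ₗ actC Z : A ⊗[ℂ] (B ⊗[ℂ] C) →ₗ[ℂ] B ⊗[ℂ] C)
      = TensorProduct.map LinearMap.id Z ∘ₗ contrA φ := by
    apply TensorProduct.ext'
    intro a w
    simp [contrA, actC]
  exact LinearMap.congr_fun h t

lemma contrB_actB (β : Module.Dual ℂ B) (Y : Module.End ℂ B) (t : A ⊗[ℂ] (B ⊗[ℂ] C)) :
    contrB β (actB Y t) = contrB (Y.dualMap β) t := by
  have h : (contrB β ∘ₗ actB Y : A ⊗[ℂ] (B ⊗[ℂ] C) →ₗ[ℂ] A ⊗[ℂ] C) = contrB (Y.dualMap β) := by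
    apply TensorProduct.ext'
    intro a w
    induction w using TensorProduct.induction_on with
    | zero => simp
    | tmul b c => simp [contrB, actB]
    | add x y hx hy =>
        simp only [TensorProduct.tmul_add, map_add] at hx hy ⊢
        rw [hx, hy]
  exact LinearMap.congr_fun h t

lemma contrC_actC (γ : Module.Dual ℂ C) (Z : Module.End ℂ C) (t : A ⊗[ℂ] (B ⊗[ℂ] C)) :
    contrC γ (actC Z t) = contrC (Z.dualMap γ) t := by
  have h : (contrC γ ∘ₗ actC Z : A ⊗[ℂ] (B ⊗[ℂ] C) →ₗ[ℂ] A ⊗[ℂ] B) = contrC (Z.dualMap γ) := by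
    apply TensorProduct.ext'
    intro a w
    induction w using TensorProduct.induction_on with
    | zero => simp
    | tmul b c => simp [contrC, actC]
    | add x y hx hy =>
        simp only [TensorProduct.tmul_add, map_add] at hx hy ⊢
        rw [hx, hy]
  exact LinearMap.congr_fun h t

lemma toHom_tmul {M N : Type*} [AddCommGroup M] [Module ℂ M] [AddCommGroup N] [Module ℂ N]
    (m : M) (n : N) (φ : Module.Dual ℂ M) : toHom (m ⊗ₜ[ℂ] n) φ = φ m • n := by
  simp [toHom]

lemma toHom_map {M N : Type*} [AddCommGroup M] [Module ℂ M] [AddCommGroup N] [Module ℂ N]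
    (Y : Module.End ℂ M) (s : M ⊗[ℂ] N) (β : Module.Dual ℂ M) :
    toHom (TensorProduct.map Y LinearMap.id s) β = toHom s (Y.dualMap β) := by
  induction s using TensorProduct.induction_on with
  | zero => simp
  | tmul b c => simp [toHom_tmul]
  | add x y hx hy => simp [map_add, hx, hy]

end Paper
namespace Paper

variable {A B C : Type*} [AddCommGroup A] [Module ℂ A]
  [AddCommGroup B] [Module ℂ B] [AddCommGroup C] [Module ℂ C]

/-- `actA` applied to `T`, as a linear map in `X`. -/
def actAT (T : A ⊗[ℂ] (B ⊗[ℂ] C)) : Module.End ℂ A →ₗ[ℂ] A ⊗[ℂ] (B ⊗[ℂ] C) where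
  toFun X := actA X T
  map_add' X X' := by simp [actA, TensorProduct.map_add_left]
  map_smul' r X := by simp [actA, TensorProduct.map_smul_left]

def actBT (T : A ⊗[ℂ] (B ⊗[ℂ] C)) : Module.End ℂ B →ₗ[ℂ] A ⊗[ℂ] (B ⊗[ℂ] C) where
  toFun Y := actB Y T
  map_add' Y Y' := by
    simp [actB, TensorProduct.map_add_left, TensorProduct.map_add_right]
  map_smul' r Y := by
    simp [actB, TensorProduct.map_smul_left, TensorProduct.map_smul_right]

def actCT (T : A ⊗[ℂ] (B ⊗[ℂ] C)) : Module.End ℂ C →ₗ[ℂ] A ⊗[ℂ] (B ⊗[ℂ] C) where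
  toFun Z := actC Z T
  map_add' Z Z' := by
    simp [actC, TensorProduct.map_add_left, TensorProduct.map_add_right]
  map_smul' r Z := by
    simp [actC, TensorProduct.map_smul_left, TensorProduct.map_smul_right]

@[simp] lemma actAT_apply (T : A ⊗[ℂ] (B ⊗[ℂ] C)) (X : Module.End ℂ A) :
    actAT T X = actA X T := rfl
@[simp] lemma actBT_apply (T : A ⊗[ℂ] (B ⊗[ℂ] C)) (Y : Module.End ℂ B) :
    actBT T Y = actB Y T := rfl
@[simp] lemma actCT_apply (T : A ⊗[ℂ] (B ⊗[ℂ] C)) (Z : Module.End ℂ C) :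
    actCT T Z = actC Z T := rfl

lemma actA_smulRight (α : Module.Dual ℂ A) (a : A) (t : A ⊗[ℂ] (B ⊗[ℂ] C)) :
    actA (α.smulRight a) t = a ⊗ₜ[ℂ] contrA α t := by
  have h : (actA (α.smulRight a) : A ⊗[ℂ] (B ⊗[ℂ] C) →ₗ[ℂ] A ⊗[ℂ] (B ⊗[ℂ] C))
      = TensorProduct.mk ℂ A (B ⊗[ℂ] C) a ∘ₗ contrA α := by
    apply TensorProduct.ext'
    intro v w
    simp [actA, contrA, TensorProduct.smul_tmul, TensorProduct.tmul_smul]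
  exact LinearMap.congr_fun h t

lemma map_smulRight_id (β : Module.Dual ℂ B) (b : B) (w : B ⊗[ℂ] C) :
    TensorProduct.map (β.smulRight b) LinearMap.id w
      = b ⊗ₜ[ℂ] (TensorProduct.lid ℂ C (TensorProduct.map β LinearMap.id w)) := by
  induction w using TensorProduct.induction_on with
  | zero => simp
  | tmul b' c => simp [TensorProduct.smul_tmul, TensorProduct.tmul_smul]
  | add x y hx hy => simp [map_add, hx, hy, TensorProduct.tmul_add]

lemma map_id_smulRight (γ : Module.Dual ℂ C) (c : C) (w : B ⊗[ℂ] C) :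
    TensorProduct.map LinearMap.id (γ.smulRight c) w
      = (TensorProduct.rid ℂ B (TensorProduct.map LinearMap.id γ w)) ⊗ₜ[ℂ] c := by
  induction w using TensorProduct.induction_on with
  | zero => simp
  | tmul b c' => simp [TensorProduct.smul_tmul, TensorProduct.tmul_smul]
  | add x y hx hy => simp [map_add, hx, hy, TensorProduct.add_tmul]

lemma actB_smulRight (β : Module.Dual ℂ B) (b : B) (t : A ⊗[ℂ] (B ⊗[ℂ] C)) :
    actB (β.smulRight b) t = TensorProduct.leftComm ℂ B A C (b ⊗ₜ[ℂ] contrB β t) := by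
  have h : (actB (β.smulRight b) : A ⊗[ℂ] (B ⊗[ℂ] C) →ₗ[ℂ] A ⊗[ℂ] (B ⊗[ℂ] C))
      = (TensorProduct.leftComm ℂ B A C).toLinearMap
          ∘ₗ TensorProduct.mk ℂ B (A ⊗[ℂ] C) b ∘ₗ contrB β := by
    apply TensorProduct.ext'
    intro a w
    simp [actB, contrB, map_smulRight_id, TensorProduct.tmul_smul]
  exact LinearMap.congr_fun h t

lemma actC_smulRight (γ : Module.Dual ℂ C) (c : C) (t : A ⊗[ℂ] (B ⊗[ℂ] C)) :
    actC (γ.smulRight c) t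
      = (TensorProduct.congr (LinearEquiv.refl ℂ A) (TensorProduct.comm ℂ C B))
          ((TensorProduct.leftComm ℂ C A B) (c ⊗ₜ[ℂ] contrC γ t)) := by
  have h : (actC (γ.smulRight c) : A ⊗[ℂ] (B ⊗[ℂ] C) →ₗ[ℂ] A ⊗[ℂ] (B ⊗[ℂ] C))
      = (TensorProduct.congr (LinearEquiv.refl ℂ A) (TensorProduct.comm ℂ C B)).toLinearMap
          ∘ₗ (TensorProduct.leftComm ℂ C A B).toLinearMap
          ∘ₗ TensorProduct.mk ℂ C (A ⊗[ℂ] B) c ∘ₗ contrC γ := by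
    apply TensorProduct.ext'
    intro a w
    simp [actC, contrC, map_id_smulRight, TensorProduct.tmul_smul]
  exact LinearMap.congr_fun h t

end Paper
namespace Paper

variable {A B C : Type*} [AddCommGroup A] [Module ℂ A]
  [AddCommGroup B] [Module ℂ B] [AddCommGroup C] [Module ℂ C]

lemma spanA_eq_range [FiniteDimensional ℂ A] (T : A ⊗[ℂ] (B ⊗[ℂ] C)) :
    spanA T = LinearMap.range (actAT T) := by
  apply le_antisymm
  · rw [spanA, Submodule.span_le]
    rintro x ⟨a, α, rfl⟩
    exact ⟨α.smulRight a, actA_smulRight α a T⟩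
  · rintro x ⟨X, rfl⟩
    have e := Module.finBasis ℂ A
    have hX : X = ∑ i, (e.coord i).smulRight (X (e i)) := by
      ext v
      simp only [LinearMap.coe_sum, Finset.sum_apply, LinearMap.smulRight_apply,
        Module.Basis.coord_apply]
      simp only [← map_smul]
      rw [← map_sum, Module.Basis.sum_repr]
    rw [actAT_apply] at *
    rw [hX]
    show actAT T _ ∈ _
    rw [map_sum]
    apply Submodule.sum_mem
    intro i _
    rw [actAT_apply, actA_smulRight]
    exact Submodule.subset_span ⟨X (e i), e.coord i, rfl⟩

lemma spanB_eq_range [FiniteDimensional ℂ B] (T : A ⊗[ℂ] (B ⊗[ℂ] C)) :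
    spanB T = LinearMap.range (actBT T) := by
  apply le_antisymm
  · rw [spanB, Submodule.span_le]
    rintro x ⟨b, β, rfl⟩
    exact ⟨β.smulRight b, actB_smulRight β b T⟩
  · rintro x ⟨Y, rfl⟩
    have e := Module.finBasis ℂ B
    have hY : Y = ∑ i, (e.coord i).smulRight (Y (e i)) := by
      ext v
      simp only [LinearMap.coe_sum, Finset.sum_apply, LinearMap.smulRight_apply,
        Module.Basis.coord_apply]
      simp only [← map_smul]
      rw [← map_sum, Module.Basis.sum_repr]
    rw [actBT_apply] at *
    rw [hY]
    show actBT T _ ∈ _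
    rw [map_sum]
    apply Submodule.sum_mem
    intro i _
    rw [actBT_apply, actB_smulRight]
    exact Submodule.subset_span ⟨Y (e i), e.coord i, rfl⟩

lemma spanC_eq_range [FiniteDimensional ℂ C] (T : A ⊗[ℂ] (B ⊗[ℂ] C)) :
    spanC T = LinearMap.range (actCT T) := by
  apply le_antisymm
  · rw [spanC, Submodule.span_le]
    rintro x ⟨c, γ, rfl⟩
    exact ⟨γ.smulRight c, actC_smulRight γ c T⟩
  · rintro x ⟨Z, rfl⟩
    have e := Module.finBasis ℂ C
    have hZ : Z = ∑ i, (e.coord i).smulRight (Z (e i)) := by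
      ext v
      simp only [LinearMap.coe_sum, Finset.sum_apply, LinearMap.smulRight_apply,
        Module.Basis.coord_apply]
      simp only [← map_smul]
      rw [← map_sum, Module.Basis.sum_repr]
    rw [actCT_apply] at *
    rw [hZ]
    show actCT T _ ∈ _
    rw [map_sum]
    apply Submodule.sum_mem
    intro i _
    rw [actCT_apply, actC_smulRight]
    exact Submodule.subset_span ⟨Z (e i), e.coord i, rfl⟩

@[simp] lemma contrA_zero (t : A ⊗[ℂ] (B ⊗[ℂ] C)) : contrA (0 : Module.Dual ℂ A) t = 0 := by
  have h : (contrA (0 : Module.Dual ℂ A) : A ⊗[ℂ] (B ⊗[ℂ] C) →ₗ[ℂ] B ⊗[ℂ] C) = 0 := by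
    apply TensorProduct.ext'; intro a w; simp [contrA]
  rw [h]; rfl

@[simp] lemma contrB_zero (t : A ⊗[ℂ] (B ⊗[ℂ] C)) : contrB (0 : Module.Dual ℂ B) t = 0 := by
  have h : (contrB (0 : Module.Dual ℂ B) : A ⊗[ℂ] (B ⊗[ℂ] C) →ₗ[ℂ] A ⊗[ℂ] C) = 0 := by
    apply TensorProduct.ext'; intro a w
    induction w using TensorProduct.induction_on with
    | zero => simp
    | tmul b c => simp [contrB]
    | add x y hx hy =>
        simp only [TensorProduct.tmul_add, map_add] at hx hy ⊢
        rw [hx, hy]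
  rw [h]; rfl

@[simp] lemma contrC_zero (t : A ⊗[ℂ] (B ⊗[ℂ] C)) : contrC (0 : Module.Dual ℂ C) t = 0 := by
  have h : (contrC (0 : Module.Dual ℂ C) : A ⊗[ℂ] (B ⊗[ℂ] C) →ₗ[ℂ] A ⊗[ℂ] B) = 0 := by
    apply TensorProduct.ext'; intro a w
    induction w using TensorProduct.induction_on with
    | zero => simp
    | tmul b c => simp [contrC]
    | add x y hx hy =>
        simp only [TensorProduct.tmul_add, map_add] at hx hy ⊢
        rw [hx, hy]
  rw [h]; rfl

lemma eq_zero_of_dualMap (X : Module.End ℂ A) (h : ∀ φ : Module.Dual ℂ A, X.dualMap φ = 0)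
    [Module.Projective ℂ A] : X = 0 := by
  ext v
  have hv : X v = 0 := (Module.forall_dual_apply_eq_zero_iff ℂ (X v)).mp
    (fun φ => by simpa using LinearMap.congr_fun (h φ) v)
  simp [hv]

lemma actA_eq_zero {T : A ⊗[ℂ] (B ⊗[ℂ] C)} [Module.Projective ℂ A]
    (hconc : Function.Injective (fun α : Module.Dual ℂ A => contrA α T))
    {X : Module.End ℂ A} (h : actA X T = 0) : X = 0 := by
  apply eq_zero_of_dualMap
  intro φ
  apply hconc
  show contrA (X.dualMap φ) T = contrA 0 T
  rw [← contrA_actA, h]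
  simp

lemma actB_eq_zero {T : A ⊗[ℂ] (B ⊗[ℂ] C)} [Module.Projective ℂ B]
    (hconc : Function.Injective (fun β : Module.Dual ℂ B => contrB β T))
    {Y : Module.End ℂ B} (h : actB Y T = 0) : Y = 0 := by
  apply eq_zero_of_dualMap
  intro β
  apply hconc
  show contrB (Y.dualMap β) T = contrB 0 T
  rw [← contrB_actB, h]
  simp

lemma actC_eq_zero {T : A ⊗[ℂ] (B ⊗[ℂ] C)} [Module.Projective ℂ C]
    (hconc : Function.Injective (fun γ : Module.Dual ℂ C => contrC γ T))
    {Z : Module.End ℂ C} (h : actC Z T = 0) : Z = 0 := by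
  apply eq_zero_of_dualMap
  intro γ
  apply hconc
  show contrC (Z.dualMap γ) T = contrC 0 T
  rw [← contrC_actC, h]
  simp

end Paper
namespace Paper

variable {A B C : Type*} [AddCommGroup A] [Module ℂ A]
  [AddCommGroup B] [Module ℂ B] [AddCommGroup C] [Module ℂ C]

/-- `X ↦ Xᵗ α` as a linear map. -/
def dualAt (α : Module.Dual ℂ A) : Module.End ℂ A →ₗ[ℂ] Module.Dual ℂ A where
  toFun X := X.dualMap α
  map_add' X X' := by ext v; simp
  map_smul' r X := by ext v; simp

@[simp] lemma dualAt_apply (α : Module.Dual ℂ A) (X : Module.End ℂ A) :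
    dualAt α X = X.dualMap α := rfl

lemma key_bij [FiniteDimensional ℂ B] [FiniteDimensional ℂ C]
    (m : ℕ) (hB : Module.finrank ℂ B = m) (hC : Module.finrank ℂ C = m)
    (T : A ⊗[ℂ] (B ⊗[ℂ] C)) {α₀ α : Module.Dual ℂ A}
    (hα₀ : Function.Bijective (toHom (contrA α₀ T)))
    (hgen : ∀ φ : Module.Dual ℂ A, ∃ p : Module.End ℂ A × Module.End ℂ B × Module.End ℂ C,
        Compat T p ∧ p.1.dualMap α = φ) :
    Function.Bijective (toHom (contrA α T)) := by
  obtain ⟨p, ⟨h1, _⟩, hφ⟩ := hgen α₀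
  have key : contrA α₀ T = TensorProduct.map p.2.1 LinearMap.id (contrA α T) := by
    rw [← hφ, ← contrA_actA, h1, contrA_actB]
  have hsurj : Function.Surjective (toHom (contrA α T)) := by
    intro c
    obtain ⟨β, hβ⟩ := hα₀.surjective c
    exact ⟨p.2.1.dualMap β, by rw [← toHom_map, ← key, hβ]⟩
  have hrk : Module.finrank ℂ (Module.Dual ℂ B) = Module.finrank ℂ C := by
    rw [Subspace.dual_finrank_eq, hB, hC]
  exact ⟨(LinearMap.injective_iff_surjective_of_finrank_eq_finrank hrk).mpr hsurj, hsurj⟩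

set_option synthInstance.maxHeartbeats 1000000 in
set_option maxHeartbeats 2000000 in
lemma key_surj [FiniteDimensional ℂ A] [FiniteDimensional ℂ B] [FiniteDimensional ℂ C]
    (m : ℕ) (hA : Module.finrank ℂ A = m)
    (T : A ⊗[ℂ] (B ⊗[ℂ] C)) (hconcise : Concise T)
    (habundant : m ≤ Module.finrank ℂ (tripleInt T))
    {α : Module.Dual ℂ A} (hbij : Function.Bijective (toHom (contrA α T))) :
    ∀ φ : Module.Dual ℂ A, ∃ p : Module.End ℂ A × Module.End ℂ B × Module.End ℂ C,
        Compat T p ∧ p.1.dualMap α = φ := by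
  classical
  set P := Module.End ℂ A × Module.End ℂ B × Module.End ℂ C with hP
  set π1 : P →ₗ[ℂ] Module.End ℂ A := LinearMap.fst ℂ _ _ with hπ1
  set π2 : P →ₗ[ℂ] Module.End ℂ B := (LinearMap.fst ℂ _ _) ∘ₗ (LinearMap.snd ℂ _ _) with hπ2
  set π3 : P →ₗ[ℂ] Module.End ℂ C := (LinearMap.snd ℂ _ _) ∘ₗ (LinearMap.snd ℂ _ _) with hπ3
  set 𝔄 : Submodule ℂ P :=
    LinearMap.ker ((actAT T) ∘ₗ π1 - (actBT T) ∘ₗ π2) ⊓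
      LinearMap.ker ((actBT T) ∘ₗ π2 - (actCT T) ∘ₗ π3) with h𝔄
  have hmem : ∀ p : P, p ∈ 𝔄 ↔ Compat T p := by
    intro p
    simp only [h𝔄, Submodule.mem_inf, LinearMap.mem_ker, LinearMap.sub_apply,
      LinearMap.comp_apply, hπ1, hπ2, hπ3, LinearMap.fst_apply, LinearMap.snd_apply,
      actAT_apply, actBT_apply, actCT_apply, sub_eq_zero]
    rfl
  -- the evaluation map to the triple intersection
  have hE : ∀ q : 𝔄, actA (q : P).1 T ∈ tripleInt T := by
    rintro ⟨p, hp⟩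
    obtain ⟨h1, h2⟩ := (hmem p).mp hp
    refine ⟨⟨?_, ?_⟩, ?_⟩
    · rw [spanA_eq_range]; exact ⟨p.1, rfl⟩
    · rw [spanB_eq_range]; exact ⟨p.2.1, h1.symm⟩
    · rw [spanC_eq_range]; exact ⟨p.2.2, by simpa using (h1.trans h2).symm⟩
  set E : 𝔄 →ₗ[ℂ] tripleInt T :=
    LinearMap.codRestrict (tripleInt T) ((actAT T) ∘ₗ π1 ∘ₗ 𝔄.subtype) (fun q => hE q) with hEdef
  have Esurj : Function.Surjective E := by
    rintro ⟨s, hs⟩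
    obtain ⟨⟨hsA, hsB⟩, hsC⟩ := hs
    rw [spanA_eq_range] at hsA
    rw [spanB_eq_range] at hsB
    rw [spanC_eq_range] at hsC
    obtain ⟨X, hX⟩ := hsA
    obtain ⟨Y, hY⟩ := hsB
    obtain ⟨Z, hZ⟩ := hsC
    simp only [actAT_apply, actBT_apply, actCT_apply] at hX hY hZ
    refine ⟨⟨(X, Y, Z), (hmem _).mpr ⟨?_, ?_⟩⟩, ?_⟩
    · rw [hX, hY]
    · rw [hY, hZ]
    · apply Subtype.ext
      exact hX
  -- the evaluation at α
  set Ψ : 𝔄 →ₗ[ℂ] Module.Dual ℂ A := (dualAt α) ∘ₗ π1 ∘ₗ 𝔄.subtype with hΨdef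
  have Ψinj : Function.Injective Ψ := by
    rw [← LinearMap.ker_eq_bot]
    rw [Submodule.eq_bot_iff]
    rintro ⟨p, hp⟩ hq
    obtain ⟨h1, h2⟩ := (hmem p).mp hp
    have hq' : p.1.dualMap α = 0 := hq
    have hY0 : TensorProduct.map p.2.1 LinearMap.id (contrA α T) = 0 := by
      rw [← contrA_actB, ← h1, contrA_actA, hq', contrA_zero]
    have hY : p.2.1 = 0 := by
      apply eq_zero_of_dualMap
      intro β
      apply hbij.injective
      have := congrArg (fun s => toHom s β) hY0
      simp only [toHom_map] at this
      simpa using this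
    have hA0 : actA p.1 T = 0 := by
      rw [h1, hY]
      simpa using map_zero (actBT T)
    have hC0 : actC p.2.2 T = 0 := by
      rw [← h2, hY]
      simpa using map_zero (actBT T)
    have hX : p.1 = 0 := actA_eq_zero hconcise.1 hA0
    have hZ : p.2.2 = 0 := actC_eq_zero hconcise.2.2 hC0
    apply Subtype.ext
    show p = 0
    exact Prod.ext hX (Prod.ext hY hZ)
  -- dimension count
  have Einj : Function.Injective E := by
    rintro ⟨p, hp⟩ ⟨p', hp'⟩ hEq
    have hact : actA p.1 T = actA p'.1 T := congrArg Subtype.val hEq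
    have hXd : p.1 - p'.1 = 0 := by
      apply actA_eq_zero hconcise.1
      show actAT T (p.1 - p'.1) = 0
      rw [map_sub]
      simpa [sub_eq_zero] using hact
    have hX : p.1 = p'.1 := sub_eq_zero.mp hXd
    obtain ⟨h1, h2⟩ := (hmem p).mp hp
    obtain ⟨h1', h2'⟩ := (hmem p').mp hp'
    have hactB : actB p.2.1 T = actB p'.2.1 T := by rw [← h1, ← h1', hX]
    have hY : p.2.1 = p'.2.1 := by
      have : p.2.1 - p'.2.1 = 0 := by
        apply actB_eq_zero hconcise.2.1
        show actBT T (p.2.1 - p'.2.1) = 0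
        rw [map_sub]
        simpa [sub_eq_zero] using hactB
      exact sub_eq_zero.mp this
    have hactC : actC p.2.2 T = actC p'.2.2 T := by rw [← h2, ← h2', hactB]
    have hZ : p.2.2 = p'.2.2 := by
      have : p.2.2 - p'.2.2 = 0 := by
        apply actC_eq_zero hconcise.2.2
        show actCT T (p.2.2 - p'.2.2) = 0
        rw [map_sub]
        simpa [sub_eq_zero] using hactC
      exact sub_eq_zero.mp this
    exact Subtype.ext (Prod.ext hX (Prod.ext hY hZ))
  have hd1 : Module.finrank ℂ (tripleInt T) ≤ Module.finrank ℂ 𝔄 :=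
    le_of_eq ((LinearEquiv.ofBijective E ⟨Einj, Esurj⟩).finrank_eq).symm
  have hd2 : Module.finrank ℂ 𝔄 = Module.finrank ℂ (LinearMap.range Ψ) :=
    (LinearMap.finrank_range_of_inj Ψinj).symm
  have hd3 : Module.finrank ℂ (LinearMap.range Ψ) ≤ m := by
    have h : Module.finrank ℂ (LinearMap.range Ψ) ≤ Module.finrank ℂ (Module.Dual ℂ A) :=
      Submodule.finrank_le _
    rwa [Subspace.dual_finrank_eq, hA] at h
  have hd4 : Module.finrank ℂ (LinearMap.range Ψ) = Module.finrank ℂ (Module.Dual ℂ A) := by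
    rw [Subspace.dual_finrank_eq, hA]
    omega
  have Ψsurj : Function.Surjective Ψ := by
    rw [← LinearMap.range_eq_top]
    exact Submodule.eq_top_of_finrank_eq hd4
  intro φ
  obtain ⟨⟨p, hp⟩, hψ⟩ := Ψsurj φ
  exact ⟨p, (hmem p).mp hp, hψ⟩

end Paper

open Paper in
/-- for a concise, 111-abundant, `1_A`-generic tensor, `α ∈ A*` generates the
`alg(T)`-module `A*` (via `(X,Y,Z)·α = Xᵗ(α)`) iff `T(α) : B* → C` has maximal rank;
in particular, `A*` is cyclic over `alg(T)` iff `T` is `1_A`-generic. -/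
theorem stmt11 {A B C : Type*} [AddCommGroup A] [Module ℂ A] [AddCommGroup B] [Module ℂ B]
    [AddCommGroup C] [Module ℂ C] [FiniteDimensional ℂ A] [FiniteDimensional ℂ B]
    [FiniteDimensional ℂ C] (m : ℕ)
    (hA : Module.finrank ℂ A = m) (hB : Module.finrank ℂ B = m)
    (hC : Module.finrank ℂ C = m)
    (T : A ⊗[ℂ] (B ⊗[ℂ] C)) (hconcise : Concise T)
    (habundant : m ≤ Module.finrank ℂ (tripleInt T))
    (h1A : ∃ α : Module.Dual ℂ A, Function.Bijective (toHom (contrA α T))) :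
    (∀ α : Module.Dual ℂ A,
      (∀ φ : Module.Dual ℂ A, ∃ p : Module.End ℂ A × Module.End ℂ B × Module.End ℂ C,
          Compat T p ∧ p.1.dualMap α = φ) ↔
        Function.Bijective (toHom (contrA α T))) ∧
    ((∃ α : Module.Dual ℂ A,
      ∀ φ : Module.Dual ℂ A, ∃ p : Module.End ℂ A × Module.End ℂ B × Module.End ℂ C,
          Compat T p ∧ p.1.dualMap α = φ) ↔
      (∃ α : Module.Dual ℂ A, Function.Bijective (toHom (contrA α T)))) := by
  obtain ⟨α₀, hα₀⟩ := h1A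
  have main : ∀ α : Module.Dual ℂ A,
      (∀ φ : Module.Dual ℂ A, ∃ p : Module.End ℂ A × Module.End ℂ B × Module.End ℂ C,
          Compat T p ∧ p.1.dualMap α = φ) ↔
        Function.Bijective (toHom (contrA α T)) := fun α =>
    ⟨fun hgen => key_bij m hB hC T hα₀ hgen,
     fun hbij => key_surj m hA T hconcise habundant hbij⟩
  exact ⟨main, ⟨fun ⟨α, hgen⟩ => ⟨α, (main α).mp hgen⟩,
    fun ⟨α, hbij⟩ => ⟨α, (main α).mpr hbij⟩⟩⟩
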